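/- arXiv:2511.08422 — 2 statements merged into one kernel-verified Lean document; each statement's English description precedes it below -/
import Mathlib

section
/- Let m > 4 be an integer divisible by 4 and let ζ_m = exp(2πi/m) ∈ ℂ. Then the degree of the field ℚ(ζ_m − ζ_m⁻¹) over ℚ equals φ(m)/2, where φ is Euler's totient function. -/
/-!
Write `α = ζ - ζ⁻¹` with `ζ` a primitive `m`-th root of unity, `m = 2n`. Since `ζ` is a root of
`X² - αX - 1`, the extension `ℚ(ζ) / ℚ(α)` has degree at most `2`, and `[ℚ(ζ) : ℚ] = φ(m)`. The
degree is exactly `2`: as `4 ∣ m`, the exponent `n - 1` is odd, hence prime to `m`, so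
`ζ' = ζ ^ (n - 1) = -ζ⁻¹` is a Galois conjugate of `ζ` with `ζ' - ζ'⁻¹ = α`. If `ζ = p(α)` for a
rational polynomial `p`, applying this relation to the conjugate `ζ'` gives `ζ' = p(α) = ζ`, which
fails for `m > 4`.
-/

open IntermediateField

/-- `zetaC m` is the primitive `m`-th root of unity `exp(2πi/m)` in `ℂ`. -/
noncomputable def zetaC (m : ℕ) : ℂ := Complex.exp (2 * Real.pi * Complex.I / m)

open Polynomial

namespace IntermediateField

variable {F E : Type*} [Field F] [Field E] [Algebra F E]

theorem finrank_mul_finrank_adjoin_simple {K : IntermediateField F E} {x : E}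
    (h : K ≤ F⟮x⟯) : Module.finrank F K * Module.finrank K K⟮x⟯ = Module.finrank F F⟮x⟯ := by
  rw [← extendScalars_adjoin h]
  exact Module.finrank_mul_finrank F K (extendScalars h)

theorem minpoly_natDegree_le_two_of_sub_inv_mem {K : IntermediateField F E} {x : E} (hx : x ≠ 0)
    (hK : x - x⁻¹ ∈ K) : (minpoly K x).natDegree ≤ 2 := by
  set p : K[X] := X ^ 2 - C ⟨x - x⁻¹, hK⟩ * X - 1
  have hroot : Polynomial.aeval x p = 0 := by
    simp only [p, map_sub, map_mul, map_pow, aeval_X, aeval_C, map_one, algebraMap_apply]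
    field_simp
    ring
  have hdeg : p.natDegree = 2 := by simp only [p]; compute_degree!
  have hp : p ≠ 0 := by rintro h; simp [h] at hdeg
  exact hdeg ▸ natDegree_le_natDegree (minpoly.degree_le_of_ne_zero K x hp hroot)

theorem finrank_adjoin_simple_eq_two_mul_finrank_adjoin_sub_inv {x : E} (hx : x ≠ 0)
    (hint : IsIntegral F x) (hnot : x ∉ F⟮x - x⁻¹⟯) :
    Module.finrank F F⟮x⟯ = 2 * Module.finrank F F⟮x - x⁻¹⟯ := by
  set K := F⟮x - x⁻¹⟯
  have hKx : K ≤ F⟮x⟯ := adjoin_simple_le_iff.mpr <|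
    sub_mem (mem_adjoin_simple_self F x) (inv_mem (mem_adjoin_simple_self F x))
  have hdeg : Module.finrank K K⟮x⟯ = 2 := by
    rw [adjoin.finrank hint.tower_top]
    refine le_antisymm (minpoly_natDegree_le_two_of_sub_inv_mem hx (mem_adjoin_simple_self F _)) ?_
    refine (minpoly.two_le_natDegree_iff hint.tower_top).mpr ?_
    rintro ⟨a, ha⟩
    exact hnot (ha ▸ a.2)
  rw [← finrank_mul_finrank_adjoin_simple hKx, hdeg, mul_comm]

end IntermediateField

theorem IsConjRoot.eq_of_mem_adjoin_aeval {F E : Type*} [Field F] [Field E] [Algebra F E]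
    {x y : E} (h : IsConjRoot F x y) (hx : IsIntegral F x) (g : F[X])
    (hg : aeval x g = aeval y g) (hmem : x ∈ F⟮aeval x g⟯) : x = y := by
  have hgx : IsIntegral F (aeval x g) :=
    IsIntegral.of_mem_of_fg _ hx.fg_adjoin_singleton _ (aeval_mem_adjoin_singleton F x)
  rw [← mem_toSubalgebra, adjoin_simple_toSubalgebra_of_isAlgebraic hgx.isAlgebraic,
    Algebra.adjoin_singleton_eq_range_aeval] at hmem
  obtain ⟨p, hp⟩ := hmem
  replace hp : aeval (aeval x g) p = x := hp
  have hroot : aeval x (p.comp g - X) = 0 := by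
    simpa only [map_sub, aeval_comp, aeval_X, sub_eq_zero] using hp
  have := aeval_eq_zero_of_dvd_aeval_eq_zero (minpoly.dvd F x hroot) h.aeval_eq_zero
  simp only [map_sub, aeval_comp, aeval_X, sub_eq_zero, ← hg] at this
  exact hp.symm.trans this

theorem Nat.coprime_sub_one_two_mul_of_even {n : ℕ} (hn : Even n) (hn0 : n ≠ 0) :
    Nat.Coprime (n - 1) (2 * n) := by
  obtain ⟨k, rfl⟩ : ∃ k, n = k + 1 := ⟨n - 1, by omega⟩
  rw [Nat.add_sub_cancel, Nat.coprime_mul_iff_right, Nat.coprime_two_right]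
  exact ⟨by simpa [Nat.even_add_one] using hn,
    Nat.coprime_self_add_right.mpr (Nat.coprime_one_right k)⟩

theorem IsPrimitiveRoot.pow_sub_one_eq_neg_inv {K : Type*} [Field K] {ζ : K} {n : ℕ}
    (hζ : IsPrimitiveRoot ζ (2 * n)) (hn : n ≠ 0) : ζ ^ (n - 1) = -ζ⁻¹ := by
  have hhalf : ζ ^ n = -1 :=
    (hζ.pow (by omega) (mul_comm 2 n)).eq_neg_one_of_two_right
  have hζ0 : ζ ≠ 0 := hζ.ne_zero (by omega)
  rw [pow_sub₀ ζ hζ0 (by omega), hhalf, pow_one, neg_one_mul]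

theorem IsPrimitiveRoot.notMem_adjoin_sub_inv {K : Type*} [Field K] [CharZero K] {ζ : K} {n : ℕ}
    (hζ : IsPrimitiveRoot ζ (2 * n)) (hn : Even n) (hn2 : 2 < n) : ζ ∉ ℚ⟮ζ - ζ⁻¹⟯ := by
  have h2n : 0 < 2 * n := by omega
  have hy : IsPrimitiveRoot (ζ ^ (n - 1)) (2 * n) :=
    hζ.pow_of_coprime _ (Nat.coprime_sub_one_two_mul_of_even hn (by omega))
  have hconj : IsConjRoot ℚ ζ (ζ ^ (n - 1)) := by
    rw [isConjRoot_def, ← cyclotomic_eq_minpoly_rat hζ h2n, ← cyclotomic_eq_minpoly_rat hy h2n]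
  have haeval : ∀ u : K, u ^ (2 * n) = 1 → aeval u (X - X ^ (2 * n - 1) : ℚ[X]) = u - u⁻¹ := by
    intro u hu
    rw [map_sub, aeval_X, map_pow, aeval_X,
      eq_inv_of_mul_eq_one_right ((mul_pow_sub_one h2n.ne' u).trans hu)]
  intro hmem
  rw [← haeval ζ hζ.pow_eq_one] at hmem
  have hfix : aeval ζ (X - X ^ (2 * n - 1) : ℚ[X]) =
      aeval (ζ ^ (n - 1)) (X - X ^ (2 * n - 1) : ℚ[X]) := by
    rw [haeval ζ hζ.pow_eq_one, haeval _ hy.pow_eq_one, hζ.pow_sub_one_eq_neg_inv (by omega),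
      inv_neg, inv_inv]
    ring
  have := hconj.eq_of_mem_adjoin_aeval (hζ.isIntegral h2n).tower_top _ hfix hmem
  have := hζ.pow_inj (i := 1) (j := n - 1) (by omega) (by omega) (by rwa [pow_one])
  omega

/-- For `m > 4` divisible by `4`, the degree of `ℚ(ζ_m - ζ_m⁻¹)` over `ℚ` is `φ(m)/2`. -/
theorem stmt4 (m : ℕ) (hm : 4 < m) (h4 : 4 ∣ m) :
    Module.finrank ℚ (ℚ⟮zetaC m - (zetaC m)⁻¹⟯ : IntermediateField ℚ ℂ) =
      Nat.totient m / 2 := by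
  obtain ⟨n, hn, rfl⟩ : ∃ n, Even n ∧ m = 2 * n :=
    ⟨m / 2, (even_iff_two_dvd).mpr (by omega), by omega⟩
  have hζ : IsPrimitiveRoot (zetaC (2 * n)) (2 * n) := Complex.isPrimitiveRoot_exp _ (by omega)
  have hdeg := finrank_adjoin_simple_eq_two_mul_finrank_adjoin_sub_inv (hζ.ne_zero (by omega))
    (hζ.isIntegral (by omega)).tower_top (hζ.notMem_adjoin_sub_inv hn (by omega))
  rw [adjoin.finrank (hζ.isIntegral (by omega)).tower_top,
    ← cyclotomic_eq_minpoly_rat hζ (by omega), natDegree_cyclotomic] at hdeg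
  omega
end

section
/- Let d ≥ 1 be an odd integer and let ζ_{2d} = exp(2πi/(2d)) and ζ_d = exp(2πi/d) in ℂ. Then ℚ(ζ_{2d} − ζ_{2d}⁻¹) = ℚ(ζ_d), as subfields of ℂ. -/
/-!
Let `ζ = ζ_{2d}`. Since `d` is odd, `ζ ^ d = -1`, so `ζ = -(ζ²) ^ ((d + 1) / 2)` and
`ℚ(ζ) = ℚ(ζ²) = ℚ(ζ_d)`. On the other side, `ζ` and `-ζ⁻¹` are the roots of
`X² - (ζ - ζ⁻¹) X - 1`, and `Xᵈ + 1` vanishes at `ζ` but equals `2` at `-ζ⁻¹`. Reducing `Xᵈ + 1`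
modulo this quadratic leaves a linear polynomial over `ℚ(ζ - ζ⁻¹)` that has `ζ` as a root and is
nonzero, so `ζ ∈ ℚ(ζ - ζ⁻¹)`.
-/

open IntermediateField

open Polynomial

namespace IntermediateField

variable {F L : Type*} [Field F] [Field L] [Algebra F L]

theorem mem_of_aeval_eq_zero_of_aeval_ne_zero {K : IntermediateField F L} {x y : L}
    (hadd : x + y ∈ K) (hmul : x * y ∈ K) {f : K[X]} (hfx : aeval x f = 0)
    (hfy : aeval y f ≠ 0) : x ∈ K := by
  let q : K[X] := X ^ 2 - C ⟨x + y, hadd⟩ * X + C ⟨x * y, hmul⟩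
  have hq : q.Monic := by unfold q; monicity!
  have hq2 : q.natDegree = 2 := by unfold q; compute_degree!
  have hr : f %ₘ q = C ((f %ₘ q).coeff 1) * X + C ((f %ₘ q).coeff 0) := by
    refine eq_X_add_C_of_natDegree_le_one (Nat.le_of_lt_succ ?_)
    simpa [hq2] using natDegree_modByMonic_lt f hq (fun h => by simp [h] at hq2)
  have hqx : aeval x q = 0 := by simp [q]; ring
  have hqy : aeval y q = 0 := by simp [q]; ring
  have hrx := congrArg (aeval x) (modByMonic_add_div f q)
  have hry := congrArg (aeval y) (modByMonic_add_div f q)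
  rw [map_add, map_mul, hqx, zero_mul, add_zero, hr] at hrx
  rw [map_add, map_mul, hqy, zero_mul, add_zero, hr] at hry
  simp only [map_add, map_mul, aeval_C, aeval_X, algebraMap_apply] at hrx hry
  set b := (f %ₘ q).coeff 1
  set c := (f %ₘ q).coeff 0
  have hb : b ≠ 0 := by
    intro hb0
    have hb0' : (b : L) = 0 := by simp [hb0]
    exact hfy (by linear_combination hrx - hry + hfx + (y - x) * hb0')
  have hx : x = ((-c / b : K) : L) := by
    have hb' : (b : L) ≠ 0 := by simpa using hb
    push_cast
    field_simp
    linear_combination hrx + hfx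
  exact hx ▸ SetLike.coe_mem _

theorem adjoin_sub_inv_eq_adjoin {ζ : L} {d : ℕ} (hd : Odd d) (hζ : ζ ^ d = -1)
    (h2 : (2 : L) ≠ 0) : F⟮ζ - ζ⁻¹⟯ = F⟮ζ⟯ := by
  have hζ0 : ζ ≠ 0 := by
    rintro rfl
    simp [zero_pow hd.pos.ne'] at hζ
  refine le_antisymm (adjoin_simple_le_iff.mpr ?_) (adjoin_simple_le_iff.mpr ?_)
  · have hmem := mem_adjoin_simple_self F ζ
    exact sub_mem hmem (inv_mem hmem)
  refine mem_of_aeval_eq_zero_of_aeval_ne_zero (y := -ζ⁻¹) (f := X ^ d + 1) ?_ ?_ ?_ ?_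
  · simpa [← sub_eq_add_neg] using mem_adjoin_simple_self F (ζ - ζ⁻¹)
  · simp [hζ0]
  · simp [hζ]
  · simpa [hd.neg_pow, inv_pow, hζ, one_add_one_eq_two] using h2

theorem adjoin_sq_eq_adjoin {ζ : L} {d : ℕ} (hd : Odd d) (hζ : ζ ^ d = -1) :
    F⟮ζ ^ 2⟯ = F⟮ζ⟯ := by
  refine le_antisymm (adjoin_simple_le_iff.mpr (pow_mem (mem_adjoin_simple_self F ζ) 2))
    (adjoin_simple_le_iff.mpr ?_)
  have hζ_eq : ζ = -(ζ ^ 2) ^ ((d + 1) / 2) := by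
    rw [← pow_mul, Nat.mul_div_cancel' (hd.add_one).two_dvd, pow_succ, hζ]
    ring
  have hmem : -(ζ ^ 2) ^ ((d + 1) / 2) ∈ F⟮ζ ^ 2⟯ :=
    neg_mem (pow_mem (mem_adjoin_simple_self F (ζ ^ 2)) _)
  rwa [← hζ_eq] at hmem

end IntermediateField

theorem zetaC_two_mul_sq (d : ℕ) : zetaC (2 * d) ^ 2 = zetaC d := by
  rw [zetaC, zetaC, ← Complex.exp_nat_mul]
  rcases eq_or_ne d 0 with rfl | hd
  · simp
  · congr 1
    push_cast
    field_simp

theorem zetaC_two_mul_pow_self {d : ℕ} (hd : d ≠ 0) : zetaC (2 * d) ^ d = -1 := by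
  rw [zetaC, ← Complex.exp_nat_mul, ← Complex.exp_pi_mul_I]
  congr 1
  push_cast
  field_simp

theorem stmt17_general (d : ℕ) (hodd : Odd d) :
    (ℚ⟮zetaC (2 * d) - (zetaC (2 * d))⁻¹⟯ : IntermediateField ℚ ℂ) = ℚ⟮zetaC d⟯ := by
  have hζ := zetaC_two_mul_pow_self hodd.pos.ne'
  rw [adjoin_sub_inv_eq_adjoin hodd hζ two_ne_zero, ← adjoin_sq_eq_adjoin hodd hζ,
    zetaC_two_mul_sq]

/-- For odd `d ≥ 1`, one has `ℚ(ζ_{2d} - ζ_{2d}⁻¹) = ℚ(ζ_d)` as subfields of `ℂ`. -/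
theorem stmt17 (d : ℕ) (hd : 1 ≤ d) (hodd : Odd d) :
    (ℚ⟮zetaC (2 * d) - (zetaC (2 * d))⁻¹⟯ : IntermediateField ℚ ℂ) = ℚ⟮zetaC d⟯ :=
  stmt17_general d hodd
end
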